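/- arXiv:math/0510220 — 8 statements merged into one kernel-verified Lean document; each statement's English description precedes it below -/
import Mathlib

section
/- If G is a group and H is a normal subgroup of G such that the quotient G/H is cyclic, then the derived subgroup G' equals the commutator subgroup [G,H]. -/
/-!
Let `N = [G, H]`. The condition `[G, H] ≤ N` says exactly that the image of `H` in `G/N` is
central, and that image is the kernel of `G/N → G/H`, whose target is cyclic. A central extension
of a cyclic group is abelian, so `G' ≤ N`.
-/

namespace Subgroup

variable {G : Type*} [Group G]

theorem commutator_top_le_iff_map_le_center (N K : Subgroup G) [N.Normal] :
    ⁅(⊤ : Subgroup G), K⁆ ≤ N ↔ K.map (QuotientGroup.mk' N) ≤ center (G ⧸ N) := by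
  rw [← commutator_top_left_eq_bot_iff_le_center,
    ← map_top_of_surjective _ (QuotientGroup.mk'_surjective N), ← map_commutator,
    map_eq_bot_iff, QuotientGroup.ker_mk']

theorem commutator_le_of_isCyclic_quotient {N K : Subgroup G} [N.Normal] [K.Normal]
    [IsCyclic (G ⧸ K)] (hNK : N ≤ K) (hK : ⁅(⊤ : Subgroup G), K⁆ ≤ N) :
    _root_.commutator G ≤ N := by
  have hker : (QuotientGroup.map N K (MonoidHom.id G) hNK).ker ≤ center (G ⧸ N) := by
    refine (QuotientGroup.ker_map N K (MonoidHom.id G) hNK).le.trans ?_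
    rw [comap_id]
    exact (commutator_top_le_iff_map_le_center N K).mp hK
  have := MonoidHom.isMulCommutative_of_isCyclic_of_ker_le_center _ hker
  rw [_root_.commutator_def, commutator_top_le_iff_map_le_center, center_eq_top]
  exact le_top

end Subgroup

theorem derived_eq_commutator_of_cyclic_quotient
    {G : Type*} [Group G] (H : Subgroup G) [H.Normal]
    (hcyc : IsCyclic (G ⧸ H)) :
    commutator G = ⁅(⊤ : Subgroup G), H⁆ :=
  le_antisymm
    (Subgroup.commutator_le_of_isCyclic_quotient (Subgroup.commutator_le_right _ _) le_rfl)
    (Subgroup.commutator_mono le_rfl le_top)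
end

section
/- If A and B are normal subgroups of a group G and i ≥ 1, then [A, γ_i(B)] is contained in the left-normed commutator subgroup [A, B, B, ..., B] (with i copies of B). -/
namespace Subgroup

variable {G : Type*} [Group G]

/-- Hall's three subgroups lemma modulo a normal subgroup `N`. -/
theorem commutator_commutator_le_of_rotate {H₁ H₂ H₃ N : Subgroup G} [N.Normal]
    (h1 : ⁅⁅H₂, H₃⁆, H₁⁆ ≤ N) (h2 : ⁅⁅H₃, H₁⁆, H₂⁆ ≤ N) : ⁅⁅H₁, H₂⁆, H₃⁆ ≤ N := by
  rw [← QuotientGroup.ker_mk' N, ← map_eq_bot_iff] at h1 h2 ⊢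
  simp only [map_commutator] at h1 h2 ⊢
  exact commutator_commutator_eq_bot_of_rotate h1 h2

def leftNormedCommutator (A B : Subgroup G) : ℕ → Subgroup G
  | 0 => A
  | k + 1 => ⁅leftNormedCommutator A B k, B⁆

variable (A B : Subgroup G)

@[simp]
theorem leftNormedCommutator_zero : leftNormedCommutator A B 0 = A := rfl

@[simp]
theorem leftNormedCommutator_succ (k : ℕ) :
    leftNormedCommutator A B (k + 1) = ⁅leftNormedCommutator A B k, B⁆ := rfl

instance leftNormedCommutator_normal [A.Normal] [B.Normal] (k : ℕ) :
    (leftNormedCommutator A B k).Normal := by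
  induction k with
  | zero => assumption
  | succ k _ => rw [leftNormedCommutator_succ]; infer_instance

/-- With `L = leftNormedCommutator A B`, induction on `j`: since
`γ_{j+2}(B) = [γ_{j+1}(B), B]`, the three subgroups lemma reduces `[L k, γ_{j+2}(B)]` to
`[[B, L k], γ_{j+1}(B)] = [L (k+1), γ_{j+1}(B)]` and `[[L k, γ_{j+1}(B)], B]`, both covered by
the induction hypothesis. -/
theorem commutator_lowerCentralSeries_le_leftNormedCommutator [A.Normal] [B.Normal] (j k : ℕ) :
    ⁅leftNormedCommutator A B k, B.lowerCentralSeries j⁆ ≤ leftNormedCommutator A B (k + j + 1) := by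
  induction j generalizing k with
  | zero => exact le_rfl
  | succ j ih =>
    rw [lowerCentralSeries_succ, commutator_comm]
    apply commutator_commutator_le_of_rotate
    · rw [commutator_comm B, ← leftNormedCommutator_succ]
      convert ih (k + 1) using 2
      omega
    · exact commutator_mono (ih k) le_rfl

end Subgroup

open Subgroup in
theorem commutator_lowerCentral_le_leftNormed_general
    {G : Type*} [Group G] (A B : Subgroup G) [A.Normal] [B.Normal]
    (i : ℕ)
    (N : ℕ → Subgroup G) (hN0 : N 0 = A)
    (hNsucc : ∀ k, N (k + 1) = ⁅N k, B⁆) :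
    ⁅A, Subgroup.map B.subtype ((⊤ : Subgroup B).lowerCentralSeries (i - 1))⁆ ≤ N i := by
  have hN : N = leftNormedCommutator A B := by
    funext k
    induction k with
    | zero => exact hN0
    | succ k ih => rw [hNsucc, ih, leftNormedCommutator_succ]
  subst hN
  rw [top_subtype_lowerCentralSeries]
  cases i with
  | zero => exact commutator_le_left A _
  | succ i => simpa using commutator_lowerCentralSeries_le_leftNormedCommutator A B i 0

theorem commutator_lowerCentral_le_leftNormed
    {G : Type*} [Group G] (A B : Subgroup G) [A.Normal] [B.Normal]
    (i : ℕ) (hi : 1 ≤ i)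
    (N : ℕ → Subgroup G) (hN0 : N 0 = A)
    (hNsucc : ∀ k, N (k + 1) = ⁅N k, B⁆) :
    ⁅A, Subgroup.map B.subtype ((⊤ : Subgroup B).lowerCentralSeries (i - 1))⁆ ≤ N i :=
  commutator_lowerCentral_le_leftNormed_general A B i N hN0 hNsucc
end

section
/- Let G be a finite p-group and let N_k (k ≥ 2^d) be the filtration of G^(d) given by N_{2^d} = G^(d) and N_{k+1} = [N_k, G]. If N_{k-1}/N_k is elementary abelian for some k ≥ 2^d + 1, then N_k/N_{k+1} is elementary abelian. -/
/-!
Write `K = ⁅H, ⊤⁆` and `L = ⁅K, ⊤⁆`. Modulo `L` the subgroup `K` is central, so for `h ∈ H`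
the commutator `⁅h, g⁆ ∈ K` commutes with `h` and `⁅h, g⁆ ^ n ≡ ⁅h ^ n, g⁆ (mod L)`, which lies
in `⁅K, ⊤⁆ = L` as soon as `h ^ n ∈ K`. Centrality also makes `x ↦ x ^ n` multiplicative on
`K / L`, so the property spreads from the generators `⁅h, g⁆` to all of `K`.
-/

open scoped commutatorElement

section

variable {G : Type*} [Group G]

theorem commutatorElement_pow_left_of_commute {x y : G} (h : Commute x ⁅x, y⁆) (n : ℕ) :
    ⁅x ^ n, y⁆ = ⁅x, y⁆ ^ n := by
  induction n with
  | zero => simp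
  | succ n ih =>
    rw [pow_succ', commutatorElement_mul_left_eq_conj_mul, ih, (h.pow_right n).eq, pow_succ]
    group

namespace Subgroup

instance commutator_top_normal (H : Subgroup G) : (⁅H, ⊤⁆ : Subgroup G).Normal :=
  normalizer_eq_top_iff.mp (top_le_iff.mp (normalizer_commutator_ge_right H ⊤))

theorem commute_mk'_of_mem {K : Subgroup G} {z : G} (hz : z ∈ K) (g : G) :
    Commute (QuotientGroup.mk' ⁅K, ⊤⁆ z) (QuotientGroup.mk' ⁅K, ⊤⁆ g) := by
  rw [← commutatorElement_eq_one_iff_commute, ← map_commutatorElement, QuotientGroup.mk'_apply,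
    QuotientGroup.eq_one_iff]
  exact commutator_mem_commutator hz (mem_top g)

theorem pow_mem_commutator_top_of_pow_mem {H : Subgroup G} {n : ℕ}
    (hH : ∀ x ∈ H, x ^ n ∈ ⁅H, (⊤ : Subgroup G)⁆) {x : G} (hx : x ∈ ⁅H, (⊤ : Subgroup G)⁆) :
    x ^ n ∈ ⁅⁅H, (⊤ : Subgroup G)⁆, (⊤ : Subgroup G)⁆ := by
  set K : Subgroup G := ⁅H, ⊤⁆
  set π := QuotientGroup.mk' ⁅K, (⊤ : Subgroup G)⁆
  rw [← QuotientGroup.eq_one_iff, ← QuotientGroup.mk'_apply, map_pow]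
  have hK : K = closure {g | ∃ h ∈ H, ∃ g' ∈ (⊤ : Subgroup G), ⁅h, g'⁆ = g} := commutator_def H ⊤
  rw [hK] at hx
  induction hx using closure_induction with
  | mem _ hc =>
    obtain ⟨h, hh, g, -, rfl⟩ := hc
    have hcomm : Commute (π h) ⁅π h, π g⁆ := by
      rw [← map_commutatorElement]
      exact (commute_mk'_of_mem (commutator_mem_commutator hh (mem_top g)) h).symm
    rw [map_commutatorElement, ← commutatorElement_pow_left_of_commute hcomm, ← map_pow,
      ← map_commutatorElement, QuotientGroup.mk'_apply, QuotientGroup.eq_one_iff]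
    exact commutator_mem_commutator (hH h hh) (mem_top g)
  | one => simp
  | mul x y hx _ ihx ihy =>
    rw [map_mul, (commute_mk'_of_mem (hK ▸ hx) y).mul_pow, ihx, ihy, one_mul]
  | inv x _ ihx => rw [map_inv, inv_pow, ihx, inv_one]

end Subgroup

end

theorem elementary_abelian_quotient_step_general
    {p : ℕ} {G : Type*} [Group G] (d : ℕ)
    (N : ℕ → Subgroup G)
    (hNsucc : ∀ j, 2 ^ d ≤ j → N (j + 1) = ⁅N j, (⊤ : Subgroup G)⁆)
    (k : ℕ) (hk : 2 ^ d + 1 ≤ k)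
    (hexp : ∀ x ∈ N (k - 1), x ^ p ∈ N k) :
    ⁅N k, N k⁆ ≤ N (k + 1) ∧ ∀ x ∈ N k, x ^ p ∈ N (k + 1) := by
  have hK : N k = ⁅N (k - 1), ⊤⁆ := by
    rw [← hNsucc (k - 1) (Nat.le_sub_one_of_lt hk), Nat.sub_add_cancel (le_of_add_le_right hk)]
  rw [hNsucc k (le_of_add_le_left hk), hK]
  rw [hK] at hexp
  exact ⟨Subgroup.commutator_mono le_rfl le_top,
    fun _ ↦ Subgroup.pow_mem_commutator_top_of_pow_mem hexp⟩

theorem elementary_abelian_quotient_step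
    {p : ℕ} [Fact p.Prime] {G : Type*} [Group G] [Finite G]
    (hG : IsPGroup p G) (d : ℕ)
    (N : ℕ → Subgroup G)
    (hN0 : N (2 ^ d) = derivedSeries G d)
    (hNsucc : ∀ j, 2 ^ d ≤ j → N (j + 1) = ⁅N j, (⊤ : Subgroup G)⁆)
    (k : ℕ) (hk : 2 ^ d + 1 ≤ k)
    (habel : ⁅N (k - 1), N (k - 1)⁆ ≤ N k)
    (hexp : ∀ x ∈ N (k - 1), x ^ p ∈ N k) :
    ⁅N k, N k⁆ ≤ N (k + 1) ∧ ∀ x ∈ N k, x ^ p ∈ N (k + 1) :=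
  elementary_abelian_quotient_step_general d N hNsucc k hk hexp
end

section
/- Let L be a graded Lie algebra over a field, with grading L = L_1 ⊕ L_2 ⊕ L_3 ⊕ L_4 ([L_i, L_j] ≤ L_{i+j}, and L_i = 0 for i ≥ 5), generated by L_1, and suppose dim L_3 = 1 and the second derived subalgebra L'' is nonzero with L'' = L_4 and dim L_4 = 1. Then there exist a, b, c ∈ L_1 with L_2 spanned by [a,b] and [a,c], L_4 spanned by [[a,b],[a,c]], and [b,c] = [a,b,a] = [a,b,b] = [a,c,a] = 0 (left-normed brackets). -/
/-!
Choose `u, v ∈ L₂` with `s = ⁅u, v⁆ ≠ 0` (they exist since `L'' = ⁅L₂, L₂⁆`); then `u, v` span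
`L₂`, `s` spans `L₄`, and the bracket is a nondegenerate alternating form on `L₂`. Since `L₁`
generates, `L₂` is spanned by `⁅L₁, L₁⁆`, which forces some `a₁ ∈ L₁`, `t` spanning `L₃`, with
`⁅a₁, t⁆ = s`. The centralizer `V` of `t` in `L₁` complements `K a₁` and is abelian (Jacobi plus
nondegeneracy), so `ad a₁` maps `V` onto `L₂`, and `⁅⁅a₁, b⁆, w⁆ = ⁅a₁, ⁅b, w⁆⁆` for `b ∈ V`,
`w ∈ L₂`. Hence some `b' ∈ V` acts on `L₂` like `a₁`, and `a = a₁ - b'` centralizes `L₂` with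
`⁅a, t⁆ = s`; finally `b, c ∈ V` with `⁅a, b⁆ = u`, `⁅a, c⁆ = v` do the job.
-/

open Module Submodule Set

section LinearAlgebra

variable {K V : Type*} [Field K] [AddCommGroup V] [Module K V]

theorem Submodule.eq_span_singleton_of_finrank_eq_one {N : Submodule K V}
    (h : finrank K N = 1) {v : V} (hv : v ∈ N) (hv0 : v ≠ 0) : N = K ∙ v :=
  have : Module.Finite K N := Module.finite_of_finrank_eq_succ h
  (eq_of_le_of_finrank_eq (span_le.2 (singleton_subset_iff.2 hv))
    (by rw [finrank_span_singleton hv0, h])).symm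

theorem Submodule.eq_span_pair_of_finrank_eq_two {N : Submodule K V}
    (h : finrank K N = 2) {u v : V} (hu : u ∈ N) (hv : v ∈ N)
    (huv : LinearIndependent K ![u, v]) : N = span K {u, v} := by
  have : Module.Finite K N := Module.finite_of_finrank_eq_succ h
  refine (eq_of_le_of_finrank_eq (span_le.2 (pair_subset hu hv)) ?_).symm
  rw [h, ← Matrix.range_cons_cons_empty u v ![]]
  simp [finrank_span_eq_card huv]

end LinearAlgebra

section LieRing

variable {R L : Type*} [CommRing R] [LieRing L] [LieAlgebra R L]

theorem lie_mem_of_mem_iSup {ι : Type*} {N : ι → Submodule R L} {P : Submodule R L}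
    (h : ∀ i j, ∀ x ∈ N i, ∀ y ∈ N j, ⁅x, y⁆ ∈ P) {x y : L}
    (hx : x ∈ ⨆ i, N i) (hy : y ∈ ⨆ i, N i) : ⁅x, y⁆ ∈ P := by
  refine iSup_induction N (motive := (⁅·, y⁆ ∈ P)) hx (fun i x hx => ?_) (by simp)
    fun x x' hx hx' => by rw [add_lie]; exact add_mem hx hx'
  refine iSup_induction N (motive := (⁅x, ·⁆ ∈ P)) hy (fun j y hy => h i j x hx y hy) (by simp)
    fun y y' hy hy' => by rw [lie_add]; exact add_mem hy hy'

theorem lie_lie_eq_of_lie_mem_span_singleton {a b t w : L} (hb : ⁅t, b⁆ = 0)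
    (hw : ⁅a, w⁆ ∈ R ∙ t) : ⁅⁅a, b⁆, w⁆ = ⁅a, ⁅b, w⁆⁆ := by
  obtain ⟨c, hc⟩ := mem_span_singleton.1 hw
  rw [lie_lie, ← hc, lie_smul, ← lie_skew b t, hb, neg_zero, smul_zero, sub_zero]

theorem span_image2_lie_le_map_ad {V : Submodule R L} (hV : ∀ x ∈ V, ∀ y ∈ V, ⁅x, y⁆ = 0)
    (a : L) : span R (image2 (⁅·, ·⁆) (↑(V ⊔ R ∙ a) : Set L) ↑(V ⊔ R ∙ a)) ≤
      V.map (LieAlgebra.ad R L a) := by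
  refine span_le.2 ?_
  rintro _ ⟨x, hx, y, hy, rfl⟩
  obtain ⟨x', hx', _, hα, rfl⟩ := mem_sup.1 hx
  obtain ⟨y', hy', _, hβ, rfl⟩ := mem_sup.1 hy
  obtain ⟨α, rfl⟩ := mem_span_singleton.1 hα
  obtain ⟨β, rfl⟩ := mem_span_singleton.1 hβ
  refine ⟨α • y' - β • x', sub_mem (smul_mem _ _ hy') (smul_mem _ _ hx'), ?_⟩
  simp only [LieAlgebra.ad_apply, add_lie, lie_add, smul_lie, lie_smul, lie_sub, lie_self,
    hV x' hx' y' hy', ← lie_skew x' a]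
  module

end LieRing

section LieAlgebra

variable {K L : Type*} [Field K] [LieRing L] [LieAlgebra K L]

theorem linearIndependent_pair_of_lie_ne_zero {u v : L} (h : ⁅u, v⁆ ≠ 0) :
    LinearIndependent K ![u, v] := by
  refine LinearIndependent.pair_iff.2 fun s t hst => ⟨?_, ?_⟩
  · simpa [h] using congr_arg (⁅·, v⁆) hst
  · simpa [h] using congr_arg (⁅u, ·⁆) hst

theorem eq_zero_of_mem_span_pair_of_lie_eq_zero {u v w : L} (huv : ⁅u, v⁆ ≠ 0)
    (hw : w ∈ span K {u, v}) (hwu : ⁅w, u⁆ = 0) (hwv : ⁅w, v⁆ = 0) : w = 0 := by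
  obtain ⟨α, β, rfl⟩ := mem_span_pair.1 hw
  simp only [add_lie, smul_lie, lie_self, ← lie_skew v u, smul_zero, zero_add, add_zero,
    smul_neg, neg_eq_zero, smul_eq_zero, huv, or_false] at hwu hwv
  simp [hwu, hwv]

theorem eq_of_lie_eq_of_mem_span_singleton {x t z z' : L} (hxt : ⁅x, t⁆ ≠ 0)
    (hz : z ∈ K ∙ t) (hz' : z' ∈ K ∙ t) (h : ⁅x, z⁆ = ⁅x, z'⁆) : z = z' := by
  obtain ⟨c, rfl⟩ := mem_span_singleton.1 hz
  obtain ⟨c', rfl⟩ := mem_span_singleton.1 hz'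
  rw [lie_smul, lie_smul] at h
  rw [smul_left_injective K hxt h]

theorem lie_lie_self_eq_zero {a b t : L} (hat : ⁅a, t⁆ ≠ 0) (hb : ⁅t, b⁆ = 0)
    (haab : ⁅a, ⁅a, b⁆⁆ ∈ K ∙ t) (hbab : ⁅b, ⁅a, b⁆⁆ ∈ K ∙ t) : ⁅⁅a, b⁆, b⁆ = 0 := by
  have : ⁅a, ⁅b, ⁅a, b⁆⁆⁆ = ⁅a, 0⁆ := by
    rw [← lie_lie_eq_of_lie_mem_span_singleton hb haab, lie_self, lie_zero]
  rw [← lie_skew, eq_of_lie_eq_of_mem_span_singleton hat hbab (zero_mem _) this, neg_zero]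

end LieAlgebra

section Graded

variable {R L : Type*} [CommRing R] [LieRing L] [LieAlgebra R L] {M : ℕ → Submodule R L}

theorem degree_two_le_span_lie_degree_one (hindep : iSupIndep M) (hM0 : M 0 = ⊥)
    (hgrade : ∀ i j, ∀ x ∈ M i, ∀ y ∈ M j, ⁅x, y⁆ ∈ M (i + j))
    (hgen : LieSubalgebra.lieSpan R L (M 1 : Set L) = ⊤) :
    M 2 ≤ span R (image2 (⁅·, ·⁆) (M 1 : Set L) (M 1 : Set L)) := by
  set W := span R (image2 (⁅·, ·⁆) (M 1 : Set L) (M 1 : Set L))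
  have hW : W ≤ M 2 := span_le.2 (image2_subset_iff.2 fun x hx y hy => hgrade 1 1 x hx y hy)
  set N := Function.update M 2 W
  have hNM : ∀ i, N i ≤ M i := fun i => by
    rcases eq_or_ne i 2 with rfl | hi
    · simpa [N] using hW
    · simp [N, Function.update_of_ne hi]
  have hN1 : N 1 = M 1 := Function.update_of_ne (by norm_num) _ _
  have hclosed : ∀ i j, ∀ x ∈ N i, ∀ y ∈ N j, ⁅x, y⁆ ∈ ⨆ k, N k := by
    intro i j x hx y hy
    rcases eq_or_ne (i + j) 2 with hij | hij
    · obtain rfl | rfl | rfl : i = 0 ∨ i = 1 ∨ i = 2 := by omega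
      · simp [(mem_bot R).1 (hM0 ▸ hNM 0 hx)]
      · obtain rfl : j = 1 := by omega
        rw [hN1] at hx hy
        exact mem_iSup_of_mem 2 (by simpa [N] using subset_span (mem_image2_of_mem hx hy))
      · obtain rfl : j = 0 := by omega
        simp [(mem_bot R).1 (hM0 ▸ hNM 0 hy)]
    · exact mem_iSup_of_mem (i + j)
        (by simpa [N, Function.update_of_ne hij] using hgrade i j x (hNM i hx) y (hNM j hy))
  have htop : ⨆ k, N k = ⊤ := by
    let S : LieSubalgebra R L :=
      { toSubmodule := ⨆ k, N k, lie_mem' := lie_mem_of_mem_iSup hclosed }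
    have : LieSubalgebra.lieSpan R L (M 1 : Set L) ≤ S :=
      LieSubalgebra.lieSpan_le.2 fun x hx => mem_iSup_of_mem 1 (hN1 ▸ hx)
    rw [hgen, top_le_iff] at this
    exact congr_arg LieSubalgebra.toSubmodule this
  have hsplit : ⨆ k, N k = W ⊔ ⨆ (k) (_ : k ≠ 2), M k := by
    rw [iSup_split_single N 2]
    exact congr_arg₂ (· ⊔ ·) (Function.update_self _ _ _)
      (biSup_congr fun k hk => Function.update_of_ne hk _ _)
  refine le_of_eq ?_
  calc M 2 = (W ⊔ ⨆ (k) (_ : k ≠ 2), M k) ⊓ M 2 := by rw [← hsplit, htop, top_inf_eq]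
    _ = W := by rw [sup_inf_assoc_of_le _ hW, inf_comm, disjoint_iff.1 (hindep 2), sup_bot_eq]

theorem derivedSeries_two_eq_bot_of_lie_degree_two_eq_zero (hM : ⨆ i, M i = ⊤)
    (hM0 : M 0 = ⊥) (hhigh : ∀ i, 5 ≤ i → M i = ⊥)
    (hgrade : ∀ i j, ∀ x ∈ M i, ∀ y ∈ M j, ⁅x, y⁆ ∈ M (i + j))
    (h22 : ∀ u ∈ M 2, ∀ v ∈ M 2, ⁅u, v⁆ = 0) : LieAlgebra.derivedSeries R L 2 = ⊥ := by
  have hL' : ∀ x ∈ LieAlgebra.derivedSeries R L 1, x ∈ ⨆ i, M (i + 2) := by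
    intro x hx
    have hx : x ∈ span R {⁅x, y⁆ | (x : L) (y : L)} := by
      rwa [← LieAlgebra.coe_derivedSeries_one_eq]
    refine span_le.2 ?_ hx
    rintro _ ⟨x, y, rfl⟩
    refine lie_mem_of_mem_iSup (fun i j x hx y hy => ?_) (hM ▸ mem_top) (hM ▸ mem_top)
    obtain rfl | hi := eq_or_ne i 0
    · simp [(mem_bot R).1 (hM0 ▸ hx)]
    obtain rfl | hj := eq_or_ne j 0
    · simp [(mem_bot R).1 (hM0 ▸ hy)]
    exact mem_iSup_of_mem (i + j - 2)
      (by rw [Nat.sub_add_cancel (by omega)]; exact hgrade i j x hx y hy)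
  rw [LieAlgebra.derivedSeries_def, LieAlgebra.derivedSeriesOfIdeal_succ,
    LieSubmodule.lie_eq_bot_iff]
  intro x hx y hy
  refine (mem_bot R).1 (lie_mem_of_mem_iSup (fun i j x hx y hy => ?_) (hL' x hx) (hL' y hy))
  rcases Nat.eq_zero_or_pos (i + j) with hij | hij
  · obtain ⟨rfl, rfl⟩ : i = 0 ∧ j = 0 := by omega
    simp [h22 x hx y hy]
  · simpa [hhigh _ (by omega : 5 ≤ i + 2 + (j + 2))] using hgrade _ _ x hx y hy

end Graded

section GradedField

variable {K L : Type*} [Field K] [LieRing L] [LieAlgebra K L] {M : ℕ → Submodule K L}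

theorem exists_lie_degree_one_three_eq (hgrade : ∀ i j, ∀ x ∈ M i, ∀ y ∈ M j, ⁅x, y⁆ ∈ M (i + j))
    (hW : M 2 ≤ span K (image2 (⁅·, ·⁆) (M 1 : Set L) (M 1 : Set L)))
    {u v : L} (hu : u ∈ M 2) (hv : v ∈ M 2) (huv : ⁅u, v⁆ ≠ 0) (hM4 : M 4 ≤ K ∙ ⁅u, v⁆) :
    ∃ a ∈ M 1, ∃ t ∈ M 3, ⁅a, t⁆ = ⁅u, v⁆ := by
  obtain ⟨a, ha, z, hz, haz⟩ : ∃ a ∈ M 1, ∃ z ∈ M 3, ⁅a, z⁆ ≠ 0 := by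
    by_contra! h
    have hv_comm : M 2 ≤ LinearMap.ker (LieAlgebra.ad K L v) := by
      refine hW.trans (span_le.2 ?_)
      rintro _ ⟨x, hx, y, hy, rfl⟩
      rw [SetLike.mem_coe, LinearMap.mem_ker, LieAlgebra.ad_apply, ← lie_skew, lie_lie,
        h x hx _ (hgrade 1 2 y hy v hv), h y hy _ (hgrade 1 2 x hx v hv), sub_zero, neg_zero]
    exact huv (by rw [← lie_skew, neg_eq_zero]; exact hv_comm hu)
  obtain ⟨κ, hκ⟩ := mem_span_singleton.1 (hM4 (hgrade 1 3 a ha z hz))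
  have hκ0 : κ ≠ 0 := by rintro rfl; exact haz (by rw [← hκ, zero_smul])
  exact ⟨a, ha, κ⁻¹ • z, smul_mem _ _ hz,
    by rw [lie_smul, ← hκ, smul_smul, inv_mul_cancel₀ hκ0, one_smul]⟩

theorem lie_eq_zero_of_mem_ker_ad (hgrade : ∀ i j, ∀ x ∈ M i, ∀ y ∈ M j, ⁅x, y⁆ ∈ M (i + j))
    {u v t : L} (hu : u ∈ M 2) (hv : v ∈ M 2) (huv : ⁅u, v⁆ ≠ 0) (hM2 : M 2 ≤ span K {u, v})
    (hM3 : M 3 ≤ K ∙ t) {x y : L} (hx : x ∈ M 1 ⊓ LinearMap.ker (LieAlgebra.ad K L t))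
    (hy : y ∈ M 1 ⊓ LinearMap.ker (LieAlgebra.ad K L t)) : ⁅x, y⁆ = 0 := by
  simp only [mem_inf, LinearMap.mem_ker, LieAlgebra.ad_apply] at hx hy
  have hxy : ∀ w ∈ M 2, ⁅⁅x, y⁆, w⁆ = 0 := fun w hw => by
    rw [lie_lie_eq_of_lie_mem_span_singleton hy.2 (hM3 (hgrade 1 2 x hx.1 w hw))]
    obtain ⟨c, hc⟩ := mem_span_singleton.1 (hM3 (hgrade 1 2 y hy.1 w hw))
    rw [← hc, lie_smul, ← lie_skew, hx.2, neg_zero, smul_zero]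
  exact eq_zero_of_mem_span_pair_of_lie_eq_zero huv (hM2 (hgrade 1 1 x hx.1 y hy.1))
    (hxy u hu) (hxy v hv)

theorem degree_two_le_map_ad (hgrade : ∀ i j, ∀ x ∈ M i, ∀ y ∈ M j, ⁅x, y⁆ ∈ M (i + j))
    (hW : M 2 ≤ span K (image2 (⁅·, ·⁆) (M 1 : Set L) (M 1 : Set L)))
    {u v a t : L} (hu : u ∈ M 2) (hv : v ∈ M 2) (huv : ⁅u, v⁆ ≠ 0) (hM2 : M 2 ≤ span K {u, v})
    (hM3 : M 3 ≤ K ∙ t) (hM4 : M 4 ≤ K ∙ ⁅a, t⁆) (ha : a ∈ M 1) (ht : t ∈ M 3) :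
    M 2 ≤ (M 1 ⊓ LinearMap.ker (LieAlgebra.ad K L t)).map (LieAlgebra.ad K L a) := by
  set V := M 1 ⊓ LinearMap.ker (LieAlgebra.ad K L t)
  have hM1 : M 1 ≤ V ⊔ K ∙ a := fun x hx => by
    obtain ⟨c, hc⟩ := mem_span_singleton.1 (hM4 (hgrade 1 3 x hx t ht))
    have hxV : x - c • a ∈ V := ⟨sub_mem hx (smul_mem _ _ ha), by
      rw [SetLike.mem_coe, LinearMap.mem_ker, LieAlgebra.ad_apply, lie_sub, lie_smul,
        ← lie_skew t x, ← lie_skew t a, ← hc]; module⟩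
    simpa using add_mem_sup hxV (mem_span_singleton.2 ⟨c, rfl⟩ : c • a ∈ K ∙ a)
  exact hW.trans ((span_mono (image2_subset hM1 hM1)).trans (span_image2_lie_le_map_ad
    (fun x hx y hy => lie_eq_zero_of_mem_ker_ad hgrade hu hv huv hM2 hM3 hx hy) a))

theorem exists_degree_one_lie_eq_and_lie_pair_eq_zero
    (hgrade : ∀ i j, ∀ x ∈ M i, ∀ y ∈ M j, ⁅x, y⁆ ∈ M (i + j))
    (hW : M 2 ≤ span K (image2 (⁅·, ·⁆) (M 1 : Set L) (M 1 : Set L)))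
    {u v a₁ t : L} (hu : u ∈ M 2) (hv : v ∈ M 2) (huv : ⁅u, v⁆ ≠ 0) (hM2 : M 2 ≤ span K {u, v})
    (hM3 : M 3 ≤ K ∙ t) (hM4 : M 4 ≤ K ∙ ⁅u, v⁆) (ha₁ : a₁ ∈ M 1) (ht : t ∈ M 3)
    (ha₁t : ⁅a₁, t⁆ = ⁅u, v⁆) : ∃ a ∈ M 1, ⁅a, t⁆ = ⁅u, v⁆ ∧ ⁅u, a⁆ = 0 ∧ ⁅v, a⁆ = 0 := by
  obtain ⟨p, hp⟩ := mem_span_singleton.1 (hM4 (hgrade 1 3 a₁ ha₁ _ (hgrade 1 2 a₁ ha₁ u hu)))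
  obtain ⟨q, hq⟩ := mem_span_singleton.1 (hM4 (hgrade 1 3 a₁ ha₁ _ (hgrade 1 2 a₁ ha₁ v hv)))
  -- `q • u - p • v` represents `w ↦ ⁅a₁, ⁅a₁, w⁆⁆` through the bracket form on `M 2`
  obtain ⟨b, ⟨hb, hbt⟩, hab⟩ :=
    degree_two_le_map_ad hgrade hW hu hv huv hM2 hM3 (ha₁t ▸ hM4) ha₁ ht
      (add_mem (smul_mem _ q hu) (smul_mem _ (-p) hv))
  rw [LieAlgebra.ad_apply] at hab
  have hbt : ⁅t, b⁆ = 0 := by simpa using hbt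
  have hb_ad : ∀ w ∈ M 2, ⁅a₁, ⁅b, w⁆⁆ = ⁅q • u + (-p) • v, w⁆ := fun w hw => by
    rw [← hab, lie_lie_eq_of_lie_mem_span_singleton hbt (hM3 (hgrade 1 2 a₁ ha₁ w hw))]
  have hinj : ∀ w ∈ M 2, ⁅a₁, ⁅b, w⁆⁆ = ⁅a₁, ⁅a₁, w⁆⁆ → ⁅b, w⁆ = ⁅a₁, w⁆ := fun w hw =>
    eq_of_lie_eq_of_mem_span_singleton (ha₁t ▸ huv) (hM3 (hgrade 1 2 b hb w hw))
      (hM3 (hgrade 1 2 a₁ ha₁ w hw))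
  have hbu : ⁅b, u⁆ = ⁅a₁, u⁆ := hinj u hu (by
    rw [hb_ad u hu, ← hp, add_lie, smul_lie, smul_lie, lie_self, ← lie_skew v u]; module)
  have hbv : ⁅b, v⁆ = ⁅a₁, v⁆ := hinj v hv (by
    rw [hb_ad v hv, ← hq, add_lie, smul_lie, smul_lie, lie_self]; module)
  refine ⟨a₁ - b, sub_mem ha₁ hb, ?_, ?_, ?_⟩
  · rw [sub_lie, ha₁t, ← lie_skew b t, hbt, neg_zero, sub_zero]
  · rw [lie_sub, ← lie_skew u a₁, ← lie_skew u b, hbu, sub_self]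
  · rw [lie_sub, ← lie_skew v a₁, ← lie_skew v b, hbv, sub_self]

end GradedField

theorem graded_lie_good_generators_general
    {K : Type*} [Field K] {L : Type*} [LieRing L] [LieAlgebra K L]
    (M : ℕ → Submodule K L)
    (hinternal : DirectSum.IsInternal M)
    (hM0 : M 0 = ⊥) (hhigh : ∀ i, 5 ≤ i → M i = ⊥)
    (hgrade : ∀ i j, ∀ x ∈ M i, ∀ y ∈ M j, ⁅x, y⁆ ∈ M (i + j))
    (hgen : LieSubalgebra.lieSpan K L (M 1 : Set L) = ⊤)
    (hdim2 : Module.finrank K (M 2) = 2)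
    (hdim3 : Module.finrank K (M 3) = 1)
    (hdim4 : Module.finrank K (M 4) = 1)
    (hne : LieAlgebra.derivedSeries K L 2 ≠ ⊥) :
    ∃ a b c : L, a ∈ M 1 ∧ b ∈ M 1 ∧ c ∈ M 1 ∧
      M 2 = Submodule.span K {⁅a, b⁆, ⁅a, c⁆} ∧
      M 4 = Submodule.span K {⁅⁅a, b⁆, ⁅a, c⁆⁆} ∧
      ⁅b, c⁆ = 0 ∧ ⁅⁅a, b⁆, a⁆ = 0 ∧ ⁅⁅a, b⁆, b⁆ = 0 ∧ ⁅⁅a, c⁆, a⁆ = 0 := by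
  have hW := degree_two_le_span_lie_degree_one hinternal.submodule_iSupIndep hM0 hgrade hgen
  obtain ⟨u, hu, v, hv, huv⟩ : ∃ u ∈ M 2, ∃ v ∈ M 2, ⁅u, v⁆ ≠ 0 := by
    by_contra! h
    exact hne (derivedSeries_two_eq_bot_of_lie_degree_two_eq_zero
      hinternal.submodule_iSup_eq_top hM0 hhigh hgrade h)
  have hM2 := eq_span_pair_of_finrank_eq_two hdim2 hu hv (linearIndependent_pair_of_lie_ne_zero huv)
  have hM4 := eq_span_singleton_of_finrank_eq_one hdim4 (hgrade 2 2 u hu v hv) huv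
  obtain ⟨a₁, ha₁, t, ht, ha₁t⟩ := exists_lie_degree_one_three_eq hgrade hW hu hv huv hM4.le
  have hM3 := eq_span_singleton_of_finrank_eq_one hdim3 ht
    fun h => huv (by rw [← ha₁t, h, lie_zero])
  obtain ⟨a, ha, hat, hua, hva⟩ := exists_degree_one_lie_eq_and_lie_pair_eq_zero hgrade hW hu hv
    huv hM2.le hM3.le hM4.le ha₁ ht ha₁t
  have hsurj := degree_two_le_map_ad hgrade hW hu hv huv hM2.le hM3.le (hat ▸ hM4.le) ha ht
  obtain ⟨b, hb, hab⟩ := hsurj hu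
  obtain ⟨c, hc, hac⟩ := hsurj hv
  rw [LieAlgebra.ad_apply] at hab hac
  have hbt : ⁅t, b⁆ = 0 := by simpa using hb.2
  refine ⟨a, b, c, ha, hb.1, hc.1, by rw [hab, hac, hM2], by rw [hab, hac, hM4],
    lie_eq_zero_of_mem_ker_ad hgrade hu hv huv hM2.le hM3.le hb hc, by rwa [hab], ?_, by rwa [hac]⟩
  exact lie_lie_self_eq_zero (hat ▸ huv) hbt (hM3.le (by rw [hab]; exact hgrade 1 2 a ha u hu))
    (hM3.le (by rw [hab]; exact hgrade 1 2 b hb.1 u hu))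

theorem graded_lie_good_generators
    {K : Type*} [Field K] {L : Type*} [LieRing L] [LieAlgebra K L]
    (M : ℕ → Submodule K L)
    (hinternal : DirectSum.IsInternal M)
    (hM0 : M 0 = ⊥) (hhigh : ∀ i, 5 ≤ i → M i = ⊥)
    (hgrade : ∀ i j, ∀ x ∈ M i, ∀ y ∈ M j, ⁅x, y⁆ ∈ M (i + j))
    (hgen : LieSubalgebra.lieSpan K L (M 1 : Set L) = ⊤)
    (hdim2 : Module.finrank K (M 2) = 2)
    (hdim3 : Module.finrank K (M 3) = 1)
    (hdim4 : Module.finrank K (M 4) = 1)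
    (hder : (LieAlgebra.derivedSeries K L 2).toSubmodule = M 4)
    (hne : LieAlgebra.derivedSeries K L 2 ≠ ⊥) :
    ∃ a b c : L, a ∈ M 1 ∧ b ∈ M 1 ∧ c ∈ M 1 ∧
      M 2 = Submodule.span K {⁅a, b⁆, ⁅a, c⁆} ∧
      M 4 = Submodule.span K {⁅⁅a, b⁆, ⁅a, c⁆⁆} ∧
      ⁅b, c⁆ = 0 ∧ ⁅⁅a, b⁆, a⁆ = 0 ∧ ⁅⁅a, b⁆, b⁆ = 0 ∧ ⁅⁅a, c⁆, a⁆ = 0 :=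
  graded_lie_good_generators_general M hinternal hM0 hhigh hgrade hgen hdim2 hdim3 hdim4 hne
end

section
/- Let L be a Lie algebra over a field of characteristic not equal to 2, and let a, b, c ∈ L satisfy [b,c] = [a,b,a] = [a,b,b] = [a,c,a] = 0 (left-normed brackets), and suppose all brackets of weight 5 in a, b, c vanish (e.g. L is nilpotent of class 4). Then [[a,b],[a,c]] = 0. -/
/-!
Leibniz's rule turns `[[a,b],a] = 0` into `[[a,b],[a,c]] = [a,[a,b,c]]` and `[[a,c],a] = 0` into
`[[a,c],[a,b]] = [a,[a,c,b]]`, while Jacobi with `[b,c] = 0` gives `[a,b,c] = [a,c,b]`. So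
`[[a,b],[a,c]]` equals its own negative, and vanishes as `2` is invertible.
-/

theorem eq_zero_of_eq_neg_of_two_ne_zero {K M : Type*} [DivisionRing K] [AddCommGroup M]
    [Module K M] (h2 : (2 : K) ≠ 0) {x : M} (hx : x = -x) : x = 0 := by
  have h2x : (2 : K) • x = 0 := by
    rw [two_smul]; nth_rewrite 1 [hx]; exact neg_add_cancel x
  exact (smul_eq_zero.mp h2x).resolve_left h2

theorem lie_lie_right_comm_of_lie_eq_zero {L : Type*} [LieRing L] {a b c : L} (hbc : ⁅b, c⁆ = 0) :
    ⁅⁅a, b⁆, c⁆ = ⁅⁅a, c⁆, b⁆ := by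
  rw [lie_lie, hbc, lie_zero, zero_sub, lie_skew]

theorem lie_lie_lie_eq_of_lie_lie_self_eq_zero {L : Type*} [LieRing L] {a b : L} (c : L)
    (hab : ⁅⁅a, b⁆, a⁆ = 0) : ⁅⁅a, b⁆, ⁅a, c⁆⁆ = ⁅a, ⁅⁅a, b⁆, c⁆⁆ := by
  rw [leibniz_lie, hab, zero_lie, zero_add]

theorem bracket_ab_ac_eq_zero_general
    {K : Type*} [Field K] (hchar : (2 : K) ≠ 0)
    {L : Type*} [LieRing L] [LieAlgebra K L] (a b c : L)
    (hbc : ⁅b, c⁆ = 0) (haba : ⁅⁅a, b⁆, a⁆ = 0)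
    (haca : ⁅⁅a, c⁆, a⁆ = 0) :
    ⁅⁅a, b⁆, ⁅a, c⁆⁆ = 0 := by
  refine eq_zero_of_eq_neg_of_two_ne_zero hchar ?_
  calc ⁅⁅a, b⁆, ⁅a, c⁆⁆ = -⁅⁅a, c⁆, ⁅a, b⁆⁆ := (lie_skew _ _).symm
    _ = -⁅a, ⁅⁅a, c⁆, b⁆⁆ := by rw [lie_lie_lie_eq_of_lie_lie_self_eq_zero b haca]
    _ = -⁅a, ⁅⁅a, b⁆, c⁆⁆ := by rw [lie_lie_right_comm_of_lie_eq_zero hbc]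
    _ = -⁅⁅a, b⁆, ⁅a, c⁆⁆ := by rw [lie_lie_lie_eq_of_lie_lie_self_eq_zero c haba]

theorem bracket_ab_ac_eq_zero
    {K : Type*} [Field K] (hchar : (2 : K) ≠ 0)
    {L : Type*} [LieRing L] [LieAlgebra K L] (a b c : L)
    (hbc : ⁅b, c⁆ = 0) (haba : ⁅⁅a, b⁆, a⁆ = 0) (habb : ⁅⁅a, b⁆, b⁆ = 0)
    (haca : ⁅⁅a, c⁆, a⁆ = 0)
    (h5 : ∀ v w x y z : L, v ∈ ({a, b, c} : Set L) → w ∈ ({a, b, c} : Set L) →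
      x ∈ ({a, b, c} : Set L) → y ∈ ({a, b, c} : Set L) → z ∈ ({a, b, c} : Set L) →
      ⁅⁅⁅⁅v, w⁆, x⁆, y⁆, z⁆ = 0) :
    ⁅⁅a, b⁆, ⁅a, c⁆⁆ = 0 :=
  bracket_ab_ac_eq_zero_general hchar a b c hbc haba haca
end

section
/- Let L be a graded Lie algebra over F_p with p ≠ 3, with grading L = L_1 ⊕ L_2 ⊕ L_3 ⊕ L_4 ⊕ ..., generated by L_1. If dim L_1 = 3 and dim L_3 = 1, then dim(L'' ∩ L_4) ≤ 2. -/
/-!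
Write `V = L₁` and let `t` span `L₃`. Comparing degrees, `L'' ∩ L₄` lies in `⁅⁅V, V⁆, ⁅V, V⁆⁆`,
which by the Leibniz rule lies in `⁅V, ⁅V, ⁅V, V⁆⁆⁆ ⊆ ⁅V, L₃⁆`, the image of `V` under
`x ↦ ⁅x, t⁆`. If this map is not injective on `V`, the image has dimension at most `2`. If it is
injective, expanding `⁅w, w⁆ = 0` for `w = ⁅a, b⁆` gives `⁅a, ⁅a, b⁆⁆ = 0` for all `a, b ∈ V`;
so the triple bracket on `V` is alternating, the Jacobi identity becomes `3⁅a, ⁅b, d⁆⁆ = 0`,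
and `⁅⁅V, V⁆, ⁅V, V⁆⁆ = 0` because `p ≠ 3`.
-/

open Submodule Module

abbrev lieBilin (R L : Type*) [CommRing R] [LieRing L] [LieAlgebra R L] :
    L →ₗ[R] L →ₗ[R] L :=
  LieModule.toEnd R L L

@[simp]
lemma lieBilin_apply {R L : Type*} [CommRing R] [LieRing L] [LieAlgebra R L] (x y : L) :
    lieBilin R L x y = ⁅x, y⁆ :=
  rfl

notation "⁅" A ", " B "⁆ₘ" => Submodule.map₂ (lieBilin _ _) A B

section Filtration

variable {R : Type*} [CommRing R] {L : Type*} [LieRing L] [LieAlgebra R L]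

lemma LieSubmodule.toSubmodule_lie_eq_map₂ (I J : LieIdeal R L) :
    (⁅I, J⁆ : LieIdeal R L).toSubmodule = ⁅I.toSubmodule, J.toSubmodule⁆ₘ := by
  rw [LieSubmodule.lieIdeal_oper_eq_linear_span', Submodule.map₂_eq_span_image2]
  rfl

variable (M : ℕ → Submodule R L)

def degreeGE (k : ℕ) : Submodule R L := ⨆ (i) (_ : k ≤ i), M i

variable {M}

lemma le_degreeGE {k i : ℕ} (h : k ≤ i) : M i ≤ degreeGE M k :=
  le_iSup₂ (f := fun i (_ : k ≤ i) => M i) i h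

lemma degreeGE_antitone : Antitone (degreeGE M) := fun _ _ hkl =>
  iSup₂_le fun _ hi => le_degreeGE (hkl.trans hi)

variable (hgrade : ∀ i j, ∀ x ∈ M i, ∀ y ∈ M j, ⁅x, y⁆ ∈ M (i + j))
include hgrade

lemma lie_le_grade (i j : ℕ) : ⁅M i, M j⁆ₘ ≤ M (i + j) :=
  map₂_le.2 fun x hx y hy => hgrade i j x hx y hy

lemma lie_degreeGE_le (a b : ℕ) : ⁅degreeGE M a, degreeGE M b⁆ₘ ≤ degreeGE M (a + b) := by
  simp only [degreeGE, map₂_iSup_left, map₂_iSup_right]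
  refine iSup₂_le fun j hj => iSup₂_le fun i hi => le_iSup₂_of_le (i + j) (add_le_add hi hj) ?_
  exact lie_le_grade hgrade i j

lemma lie_sup_degreeGE_le {A B : Submodule R L} {a b : ℕ} (hA : A ≤ degreeGE M a)
    (hB : B ≤ degreeGE M b) :
    ⁅A ⊔ degreeGE M (a + 1), B ⊔ degreeGE M (b + 1)⁆ₘ ≤ ⁅A, B⁆ₘ ⊔ degreeGE M (a + b + 1) := by
  have hle {A' B' : Submodule R L} {a' b' : ℕ} (hA' : A' ≤ degreeGE M a')
      (hB' : B' ≤ degreeGE M b') (h : a + b + 1 ≤ a' + b') :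
      ⁅A', B'⁆ₘ ≤ degreeGE M (a + b + 1) :=
    (map₂_le_map₂ hA' hB').trans <| (lie_degreeGE_le hgrade a' b').trans (degreeGE_antitone h)
  simp only [map₂_sup_left, map₂_sup_right]
  refine sup_le (sup_le le_sup_left (le_sup_of_le_right (hle le_rfl hB (by omega))))
    (le_sup_of_le_right (sup_le (hle hA le_rfl (by omega)) (hle le_rfl le_rfl (by omega))))

omit hgrade in
lemma top_le_sup_degreeGE (hM : ⨆ i, M i = ⊤) (hM0 : M 0 = ⊥) : ⊤ ≤ M 1 ⊔ degreeGE M 2 := by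
  refine hM ▸ iSup_le fun i => ?_
  rcases i with _ | _ | i
  · simp [hM0]
  · exact le_sup_left
  · exact le_sup_of_le_right (le_degreeGE (by omega))

omit hgrade in
lemma inf_le_of_le_sup_degreeGE (hM : iSupIndep M) {A N : Submodule R L} {n : ℕ}
    (hA : A ≤ M n) (hN : N ≤ A ⊔ degreeGE M (n + 1)) : N ⊓ M n ≤ A := by
  have hdisj : degreeGE M (n + 1) ⊓ M n = ⊥ :=
    (hM n).symm.mono_left (iSup₂_le fun i hi => le_iSup₂_of_le i (by omega) le_rfl) |>.eq_bot
  calc N ⊓ M n ≤ (A ⊔ degreeGE M (n + 1)) ⊓ M n := inf_le_inf_right _ hN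
    _ = A := by rw [sup_inf_assoc_of_le _ hA, hdisj, sup_bot_eq]

lemma derivedSeries_two_inf_le (hM : DirectSum.IsInternal M) (hM0 : M 0 = ⊥) :
    (LieAlgebra.derivedSeries R L 2).toSubmodule ⊓ M 4 ≤ ⁅⁅M 1, M 1⁆ₘ, ⁅M 1, M 1⁆ₘ⁆ₘ := by
  have hM1 : M 1 ≤ degreeGE M 1 := le_degreeGE le_rfl
  have hM2 : ⁅M 1, M 1⁆ₘ ≤ degreeGE M 2 :=
    (lie_le_grade hgrade 1 1).trans (le_degreeGE le_rfl)
  have hD1 : (LieAlgebra.derivedSeries R L 1).toSubmodule ≤ ⁅M 1, M 1⁆ₘ ⊔ degreeGE M 3 := by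
    rw [LieAlgebra.derivedSeries_def, LieAlgebra.derivedSeriesOfIdeal_succ,
      LieAlgebra.derivedSeriesOfIdeal_zero, LieSubmodule.toSubmodule_lie_eq_map₂]
    exact (map₂_le_map₂ (top_le_sup_degreeGE hM.submodule_iSup_eq_top hM0)
      (top_le_sup_degreeGE hM.submodule_iSup_eq_top hM0)).trans
      (lie_sup_degreeGE_le hgrade hM1 hM1)
  refine inf_le_of_le_sup_degreeGE hM.submodule_iSupIndep ?_ ?_
  · exact (map₂_le_map₂ (lie_le_grade hgrade 1 1) (lie_le_grade hgrade 1 1)).trans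
      (lie_le_grade hgrade 2 2)
  · rw [LieAlgebra.derivedSeries_def, LieAlgebra.derivedSeriesOfIdeal_succ,
      ← LieAlgebra.derivedSeries_def, LieSubmodule.toSubmodule_lie_eq_map₂]
    exact (map₂_le_map₂ hD1 hD1).trans (lie_sup_degreeGE_le hgrade hM2 hM2)

end Filtration

section TripleBracket

lemma lie_lie_le_sup {R L : Type*} [CommRing R] [LieRing L] [LieAlgebra R L]
    (A B C : Submodule R L) : ⁅⁅A, B⁆ₘ, C⁆ₘ ≤ ⁅A, ⁅B, C⁆ₘ⁆ₘ ⊔ ⁅B, ⁅A, C⁆ₘ⁆ₘ := by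
  refine map₂_le.2 fun x hx c hc => ?_
  have hAB : ⁅A, B⁆ₘ ≤ comap ((lieBilin R L).flip c) (⁅A, ⁅B, C⁆ₘ⁆ₘ ⊔ ⁅B, ⁅A, C⁆ₘ⁆ₘ) := by
    refine map₂_le.2 fun a ha b hb => ?_
    simp only [mem_comap, LinearMap.flip_apply, lieBilin_apply, lie_lie]
    exact sub_mem (mem_sup_left (apply_mem_map₂ _ ha (apply_mem_map₂ _ hb hc)))
      (mem_sup_right (apply_mem_map₂ _ hb (apply_mem_map₂ _ ha hc)))
  exact hAB hx

variable {K : Type*} [Field K] {L : Type*} [LieRing L] [LieAlgebra K L] {V : Submodule K L}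
  {t : L}

lemma lie_lie_self_eq_zero_s11 (hV : ⁅V, ⁅V, V⁆ₘ⁆ₘ ≤ K ∙ t)
    (hinj : Disjoint V (LinearMap.ker ((lieBilin K L).flip t))) {a b : L} (ha : a ∈ V)
    (hb : b ∈ V) : ⁅a, ⁅a, b⁆⁆ = 0 := by
  have hmem {x y z : L} (hx : x ∈ V) (hy : y ∈ V) (hz : z ∈ V) : ∃ c : K, c • t = ⁅x, ⁅y, z⁆⁆ :=
    mem_span_singleton.1 (hV (apply_mem_map₂ _ hx (apply_mem_map₂ _ hy hz)))
  obtain ⟨α, hα⟩ := hmem hb ha hb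
  obtain ⟨β, hβ⟩ := hmem ha ha hb
  have hαβ : α • a - β • b = 0 := by
    refine disjoint_def.1 hinj _ (sub_mem (smul_mem _ _ ha) (smul_mem _ _ hb)) ?_
    have h := lie_self ⁅a, b⁆
    rw [lie_lie, ← hα, ← hβ, lie_smul, lie_smul] at h
    simpa [sub_lie, smul_lie] using h
  by_cases hβ0 : β = 0
  · rw [← hβ, hβ0, zero_smul]
  · have hba : b = (β⁻¹ * α) • a := by
      rw [mul_smul, sub_eq_zero.1 hαβ, inv_smul_smul₀ hβ0]
    rw [hba, lie_smul, lie_self, smul_zero, lie_zero]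

lemma lie_lie_eq_zero_of_lie_lie_self (h3 : (3 : K) ≠ 0)
    (h : ∀ a ∈ V, ∀ b ∈ V, ⁅a, ⁅a, b⁆⁆ = 0) {a b d : L} (ha : a ∈ V) (hb : b ∈ V) (hd : d ∈ V) :
    ⁅a, ⁅b, d⁆⁆ = 0 := by
  have hswap {x y z : L} (hx : x ∈ V) (hy : y ∈ V) (hz : z ∈ V) : ⁅x, ⁅y, z⁆⁆ = -⁅y, ⁅x, z⁆⁆ := by
    have := h _ (add_mem hx hy) z hz
    simp only [add_lie, lie_add, h x hx z hz, h y hy z hz] at this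
    exact eq_neg_of_add_eq_zero_right (by simpa using this)
  have hjac := lie_jacobi a b d
  rw [← lie_skew d a, lie_neg, hswap hb ha hd, hswap hd ha hb, ← lie_skew d b, lie_neg,
    neg_neg] at hjac
  have h3x : (3 : K) • ⁅a, ⁅b, d⁆⁆ = 0 := by linear_combination (norm := module) hjac
  exact (smul_eq_zero.1 h3x).resolve_left h3

lemma lie_lie_eq_bot_of_disjoint (h3 : (3 : K) ≠ 0) (hV : ⁅V, ⁅V, V⁆ₘ⁆ₘ ≤ K ∙ t)
    (hinj : Disjoint V (LinearMap.ker ((lieBilin K L).flip t))) : ⁅V, ⁅V, V⁆ₘ⁆ₘ = ⊥ := by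
  have hself : ∀ a ∈ V, ∀ b ∈ V, ⁅a, ⁅a, b⁆⁆ = 0 := fun _ ha _ hb =>
    lie_lie_self_eq_zero_s11 hV hinj ha hb
  refine eq_bot_iff.2 (map₂_le.2 fun a ha w hw => ?_)
  have hVV : ⁅V, V⁆ₘ ≤ LinearMap.ker (lieBilin K L a) := map₂_le.2 fun b hb d hd => by
    simp [lie_lie_eq_zero_of_lie_lie_self h3 hself ha hb hd]
  simpa using hVV hw

lemma finrank_le_of_le_lie_lie [FiniteDimensional K V] (h3 : (3 : K) ≠ 0)
    (hV : ⁅V, ⁅V, V⁆ₘ⁆ₘ ≤ K ∙ t) {N : Submodule K L} (hN : N ≤ ⁅⁅V, V⁆ₘ, ⁅V, V⁆ₘ⁆ₘ) :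
    finrank K N ≤ finrank K V - 1 := by
  replace hN : N ≤ ⁅V, ⁅V, ⁅V, V⁆ₘ⁆ₘ⁆ₘ := hN.trans (by simpa using lie_lie_le_sup V V ⁅V, V⁆ₘ)
  by_cases hinj : Disjoint V (LinearMap.ker ((lieBilin K L).flip t))
  · rw [lie_lie_eq_bot_of_disjoint h3 hV hinj, map₂_bot_right, le_bot_iff] at hN
    rw [hN, finrank_bot]
    exact Nat.zero_le _
  · have hmap : N ≤ V.map ((lieBilin K L).flip t) := by
      rw [← map₂_span_singleton_eq_map_flip]
      exact hN.trans (map₂_le_map₂_right hV)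
    have hlt := mt (Submodule.disjoint_ker_of_finrank_le _) hinj
    have := Submodule.finrank_mono hmap
    omega

end TripleBracket

theorem second_derived_inter_degree_four_dim_le_two_general
    {p : ℕ} [Fact p.Prime] (hp3 : p ≠ 3)
    {L : Type*} [LieRing L] [LieAlgebra (ZMod p) L]
    (M : ℕ → Submodule (ZMod p) L)
    (hinternal : DirectSum.IsInternal M)
    (hM0 : M 0 = ⊥)
    (hgrade : ∀ i j, ∀ x ∈ M i, ∀ y ∈ M j, ⁅x, y⁆ ∈ M (i + j))
    (hdim1 : Module.finrank (ZMod p) (M 1) = 3)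
    (hdim3 : Module.finrank (ZMod p) (M 3) = 1) :
    Module.finrank (ZMod p)
      ((LieAlgebra.derivedSeries (ZMod p) L 2).toSubmodule ⊓ M 4 : Submodule (ZMod p) L) ≤ 2 := by
  have h3 : (3 : ZMod p) ≠ 0 := by
    rw [← Nat.cast_ofNat, Ne, ZMod.natCast_eq_zero_iff,
      Nat.prime_dvd_prime_iff_eq Fact.out Nat.prime_three]
    exact hp3
  obtain ⟨t, ht⟩ : ∃ t : L, M 3 ≤ (ZMod p) ∙ t := by
    obtain ⟨v, -, hv⟩ := finrank_eq_one_iff'.1 hdim3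
    refine ⟨v, fun x hx => mem_span_singleton.2 ?_⟩
    obtain ⟨c, hc⟩ := hv ⟨x, hx⟩
    exact ⟨c, congrArg Subtype.val hc⟩
  have : FiniteDimensional (ZMod p) (M 1) := Module.finite_of_finrank_pos (by omega)
  have h111 : ⁅M 1, ⁅M 1, M 1⁆ₘ⁆ₘ ≤ (ZMod p) ∙ t :=
    ((map₂_le_map₂_right (lie_le_grade hgrade 1 1)).trans (lie_le_grade hgrade 1 2)).trans ht
  have := finrank_le_of_le_lie_lie h3 h111 (derivedSeries_two_inf_le hgrade hinternal hM0)
  omega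

theorem second_derived_inter_degree_four_dim_le_two
    {p : ℕ} [Fact p.Prime] (hp3 : p ≠ 3)
    {L : Type*} [LieRing L] [LieAlgebra (ZMod p) L]
    (M : ℕ → Submodule (ZMod p) L)
    (hinternal : DirectSum.IsInternal M)
    (hM0 : M 0 = ⊥)
    (hgrade : ∀ i j, ∀ x ∈ M i, ∀ y ∈ M j, ⁅x, y⁆ ∈ M (i + j))
    (hgen : LieSubalgebra.lieSpan (ZMod p) L (M 1 : Set L) = ⊤)
    (hdim1 : Module.finrank (ZMod p) (M 1) = 3)
    (hdim3 : Module.finrank (ZMod p) (M 3) = 1) :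
    Module.finrank (ZMod p)
      ((LieAlgebra.derivedSeries (ZMod p) L 2).toSubmodule ⊓ M 4 : Submodule (ZMod p) L) ≤ 2 :=
  second_derived_inter_degree_four_dim_le_two_general hp3 M hinternal hM0 hgrade hdim1 hdim3
end

section
/- Let L be a Lie algebra over a field with three elements x, y, z, and suppose the subspace spanned by the left-normed weight-3 brackets in x, y, z is at most 1-dimensional and is spanned by [x,y,x] ≠ 0. Write [y,x,y] = α[x,y,x]. If all brackets of weight 5 vanish, then [x,y,x,y] = -α[x,y,x,x]; consequently the span of [x,y,x,x], [x,y,x,y], [x,y,x,z] has dimension at most 2. -/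
theorem weight_four_span_dim_le_two
    {K : Type*} [Field K] {L : Type*} [LieRing L] [LieAlgebra K L]
    (x y z : L) (α : K)
    (hne : ⁅⁅x, y⁆, x⁆ ≠ 0)
    (hspan3 : ∀ u v w : L, u ∈ ({x, y, z} : Set L) → v ∈ ({x, y, z} : Set L) →
      w ∈ ({x, y, z} : Set L) → ⁅⁅u, v⁆, w⁆ ∈ Submodule.span K {⁅⁅x, y⁆, x⁆})
    (hα : ⁅⁅y, x⁆, y⁆ = α • ⁅⁅x, y⁆, x⁆)
    (h5 : ∀ u v w s t : L, u ∈ ({x, y, z} : Set L) → v ∈ ({x, y, z} : Set L) →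
      w ∈ ({x, y, z} : Set L) → s ∈ ({x, y, z} : Set L) → t ∈ ({x, y, z} : Set L) →
      ⁅⁅⁅⁅u, v⁆, w⁆, s⁆, t⁆ = 0) :
    ⁅⁅⁅x, y⁆, x⁆, y⁆ = -α • ⁅⁅⁅x, y⁆, x⁆, x⁆ ∧
      Module.finrank K
        (Submodule.span K {⁅⁅⁅x, y⁆, x⁆, x⁆, ⁅⁅⁅x, y⁆, x⁆, y⁆, ⁅⁅⁅x, y⁆, x⁆, z⁆}) ≤ 2 := by
  have h1 : ⁅⁅x, y⁆, y⁆ = -α • ⁅⁅x, y⁆, x⁆ := by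
    have : ⁅⁅x, y⁆, y⁆ = -⁅⁅y, x⁆, y⁆ := by rw [← lie_skew x y, neg_lie]
    rw [this, hα, neg_smul]
  have key : ⁅⁅⁅x, y⁆, x⁆, y⁆ = -α • ⁅⁅⁅x, y⁆, x⁆, x⁆ := by
    have j : ⁅⁅⁅x, y⁆, x⁆, y⁆ = ⁅⁅x, y⁆, ⁅x, y⁆⁆ - ⁅x, ⁅⁅x, y⁆, y⁆⁆ := lie_lie _ _ _
    rw [j, lie_self, h1, lie_smul, ← lie_skew x, smul_neg, zero_sub, neg_smul, neg_neg]
  refine ⟨key, ?_⟩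
  set a := ⁅⁅⁅x, y⁆, x⁆, x⁆
  set c := ⁅⁅⁅x, y⁆, x⁆, z⁆
  have hset : ({a, ⁅⁅⁅x, y⁆, x⁆, y⁆, c} : Set L) = insert (⁅⁅⁅x, y⁆, x⁆, y⁆) {a, c} := by
    rw [Set.insert_comm]
  have hmem : ⁅⁅⁅x, y⁆, x⁆, y⁆ ∈ Submodule.span K ({a, c} : Set L) := by
    rw [key]
    exact Submodule.smul_mem _ _ (Submodule.subset_span (Set.mem_insert _ _))
  rw [hset, Submodule.span_insert_eq_span hmem]
  classical
  refine (finrank_span_le_card _).trans ?_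
  have : ({a, c} : Set L).toFinset ⊆ {a, c} := by
    intro t ht
    simpa using (Set.mem_toFinset.mp ht)
  exact (Finset.card_le_card this).trans ((Finset.card_insert_le _ _).trans (by simp))
end

section
/- Let G be a finite p-group and H a non-abelian normal subgroup of G with H ≤ γ_i(G). Then |H/H'| ≥ p^{i+1} and |H| ≥ p^{i+2}. -/
/-!
Write `H₀ = H` and `Hₖ₊₁ = [Hₖ, G]`. In a nilpotent group `[K, G] < K` for every normal `K ≠ 1`,
so in a `p`-group every step `Hₖ₊₁ < Hₖ` above `1` has index divisible by `p`. The three subgroups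
lemma gives `[Hₘ, γₖ₊₁(G)] ≤ Hₘ₊ₖ₊₁`; hence `H ≤ γᵢ(G)` yields `H' ≤ Hᵢ`, and `p ^ i` divides
`|H : Hᵢ|`. The last factor `p` comes from the following observation: if `|H : H₁| = p`, then
`H = ⟨x⟩H₁`, so `H' ≤ [H, H₁] ≤ Hᵢ₊₁`, which is strictly smaller than `H'` once `H' = Hᵢ`.
Finally `|H| = |H : H'| |H'|` with `p ∣ |H'|`.
-/

open Subgroup

namespace Subgroup

variable {G : Type*} [Group G]

theorem commutator_commutator_le_of_rotate_s18 {A B C N : Subgroup G} [N.Normal]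
    (h₁ : ⁅⁅B, C⁆, A⁆ ≤ N) (h₂ : ⁅⁅C, A⁆, B⁆ ≤ N) : ⁅⁅A, B⁆, C⁆ ≤ N := by
  simp only [← QuotientGroup.ker_mk' N, ← map_eq_bot_iff, map_commutator] at h₁ h₂ ⊢
  exact commutator_commutator_eq_bot_of_rotate h₁ h₂

theorem commutator_top_lt_of_ne_bot [Group.IsNilpotent G] {K : Subgroup G} [K.Normal]
    (hK : K ≠ ⊥) : ⁅K, ⊤⁆ < K := by
  refine (commutator_le_left K ⊤).lt_of_ne fun hfix ↦ hK ?_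
  have hK_le : ∀ n, K ≤ (⊤ : Subgroup G).lowerCentralSeries n := by
    intro n
    induction n with
    | zero => exact le_top
    | succ n ih => exact hfix ▸ commutator_mono ih le_rfl
  exact le_bot_iff.mp (lowerCentralSeries_nilpotencyClass (G := G) ▸ hK_le _)

theorem commutator_self_eq_bot_of_le_zpowers_sup {H K : Subgroup G} {x : G} (hx : x ∈ H)
    (hH : H ≤ zpowers x ⊔ K) (hHK : ⁅H, K⁆ = ⊥) : ⁅H, H⁆ = ⊥ := by
  have hHK' : H ≤ centralizer K := commutator_eq_bot_iff_le_centralizer.mp hHK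
  have hxH : zpowers x ≤ centralizer H := by
    refine le_centralizer_iff.mp (hH.trans (sup_le ?_ ?_))
    · exact le_centralizer_iff_isMulCommutative.mpr inferInstance
    · exact le_centralizer_iff.mp (zpowers_le.mpr (hHK' hx))
  exact commutator_eq_bot_iff_le_centralizer.mpr
    (hH.trans (sup_le hxH (le_centralizer_iff.mp hHK')))

theorem commutator_self_le_of_le_zpowers_sup {H K : Subgroup G} [H.Normal] [K.Normal] {x : G}
    (hx : x ∈ H) (hH : H ≤ zpowers x ⊔ K) : ⁅H, H⁆ ≤ ⁅H, K⁆ := by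
  let f := QuotientGroup.mk' ⁅H, K⁆
  have hfH : H.map f ≤ zpowers (f x) ⊔ K.map f := by
    simpa only [map_sup, MonoidHom.map_zpowers] using map_mono (f := f) hH
  have hfHK : ⁅H.map f, K.map f⁆ = ⊥ := by
    rw [← map_commutator, map_eq_bot_iff, QuotientGroup.ker_mk']
  rw [← QuotientGroup.ker_mk' ⁅H, K⁆, ← map_eq_bot_iff, map_commutator]
  exact commutator_self_eq_bot_of_le_zpowers_sup (mem_map_of_mem f hx) hfH hfHK

/-- `[H, G, …, G]` with `n` copies of `G`. -/
def lowerCentralSeriesFrom (H : Subgroup G) (n : ℕ) : Subgroup G :=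
  (fun K ↦ ⁅K, ⊤⁆)^[n] H

section lowerCentralSeriesFrom

variable (H : Subgroup G)

@[simp]
theorem lowerCentralSeriesFrom_zero : H.lowerCentralSeriesFrom 0 = H := rfl

theorem lowerCentralSeriesFrom_succ (n : ℕ) :
    H.lowerCentralSeriesFrom (n + 1) = ⁅H.lowerCentralSeriesFrom n, ⊤⁆ :=
  Function.iterate_succ_apply' _ n H

theorem lowerCentralSeriesFrom_one : H.lowerCentralSeriesFrom 1 = ⁅H, ⊤⁆ := rfl

theorem lowerCentralSeriesFrom_lowerCentralSeriesFrom (m n : ℕ) :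
    (H.lowerCentralSeriesFrom m).lowerCentralSeriesFrom n = H.lowerCentralSeriesFrom (n + m) :=
  (Function.iterate_add_apply _ n m H).symm

variable [H.Normal]

instance lowerCentralSeriesFrom_normal (n : ℕ) : (H.lowerCentralSeriesFrom n).Normal := by
  induction n with
  | zero => assumption
  | succ n ih => rw [lowerCentralSeriesFrom_succ]; infer_instance

theorem lowerCentralSeriesFrom_antitone : Antitone H.lowerCentralSeriesFrom :=
  antitone_nat_of_succ_le fun n ↦ by
    rw [lowerCentralSeriesFrom_succ]; exact commutator_le_left _ _

theorem lowerCentralSeriesFrom_le_self (n : ℕ) : H.lowerCentralSeriesFrom n ≤ H :=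
  H.lowerCentralSeriesFrom_antitone (Nat.zero_le n)

theorem commutator_lowerCentralSeries_le_lowerCentralSeriesFrom (k : ℕ) :
    ⁅H, (⊤ : Subgroup G).lowerCentralSeries k⁆ ≤ H.lowerCentralSeriesFrom (k + 1) := by
  induction k generalizing H with
  | zero => simp [lowerCentralSeriesFrom_succ]
  | succ k ih =>
    rw [lowerCentralSeries_succ, commutator_comm]
    apply commutator_commutator_le_of_rotate_s18
    · rw [commutator_comm ⊤ H]
      have h := ih (H.lowerCentralSeriesFrom 1)
      rwa [lowerCentralSeriesFrom_lowerCentralSeriesFrom, lowerCentralSeriesFrom_one] at h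
    · rw [lowerCentralSeriesFrom_succ]
      exact commutator_mono (ih H) le_rfl

theorem commutator_lt_lowerCentralSeriesFrom_of_le_zpowers_sup [Group.IsNilpotent G]
    (hH' : ⁅H, H⁆ ≠ ⊥) {j : ℕ} (hle : H ≤ (⊤ : Subgroup G).lowerCentralSeries j) {x : G}
    (hx : x ∈ H) (hH : H ≤ zpowers x ⊔ H.lowerCentralSeriesFrom 1) :
    ⁅H, H⁆ < H.lowerCentralSeriesFrom (j + 1) := by
  refine lt_of_le_of_ne ((commutator_mono le_rfl hle).trans
    (H.commutator_lowerCentralSeries_le_lowerCentralSeriesFrom j)) fun hD ↦ ?_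
  have hH₁ : ⁅H.lowerCentralSeriesFrom 1, H⁆ ≤ H.lowerCentralSeriesFrom (j + 2) := by
    rw [← H.lowerCentralSeriesFrom_lowerCentralSeriesFrom 1 (j + 1)]
    exact (commutator_mono le_rfl hle).trans
      ((H.lowerCentralSeriesFrom 1).commutator_lowerCentralSeries_le_lowerCentralSeriesFrom j)
  refine (commutator_top_lt_of_ne_bot hH').not_ge ?_
  calc ⁅H, H⁆ ≤ ⁅H, H.lowerCentralSeriesFrom 1⁆ := commutator_self_le_of_le_zpowers_sup hx hH
    _ = ⁅H.lowerCentralSeriesFrom 1, H⁆ := commutator_comm _ _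
    _ ≤ H.lowerCentralSeriesFrom (j + 2) := hH₁
    _ = ⁅⁅H, H⁆, ⊤⁆ := by rw [lowerCentralSeriesFrom_succ, hD]

end lowerCentralSeriesFrom

end Subgroup

namespace IsPGroup

variable {p : ℕ} [Fact p.Prime] {G : Type*} [Group G] [Finite G]

theorem dvd_relIndex_of_not_le (hG : IsPGroup p G) {A B : Subgroup G} (h : ¬ B ≤ A) :
    p ∣ A.relIndex B := by
  obtain ⟨m, hm⟩ : ∃ m, A.relIndex B = p ^ m := (hG.to_subgroup B).index (A.subgroupOf B)
  have hm0 : m ≠ 0 := by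
    rintro rfl
    exact h (relIndex_eq_one.mp hm)
  exact hm ▸ dvd_pow_self p hm0

theorem pow_dvd_relIndex_lowerCentralSeriesFrom (hG : IsPGroup p G) (H : Subgroup G) [H.Normal]
    {n : ℕ} (hn : H.lowerCentralSeriesFrom n ≠ ⊥) :
    p ^ n ∣ (H.lowerCentralSeriesFrom n).relIndex H := by
  have := hG.isNilpotent
  induction n generalizing H with
  | zero => simp
  | succ n ih =>
    have hH : H ≠ ⊥ := ne_bot_of_le_ne_bot hn (H.lowerCentralSeriesFrom_le_self _)
    have hH₁ : (H.lowerCentralSeriesFrom 1).lowerCentralSeriesFrom n ≠ ⊥ := by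
      rwa [lowerCentralSeriesFrom_lowerCentralSeriesFrom]
    have h := ih _ hH₁
    rw [lowerCentralSeriesFrom_lowerCentralSeriesFrom] at h
    rw [← relIndex_mul_relIndex _ _ _ (H.lowerCentralSeriesFrom_antitone (by omega : 1 ≤ n + 1))
      (H.lowerCentralSeriesFrom_le_self 1), pow_succ]
    exact mul_dvd_mul h (hG.dvd_relIndex_of_not_le (commutator_top_lt_of_ne_bot hH).not_ge)

theorem exists_le_zpowers_sup_of_not_sq_dvd (hG : IsPGroup p G) {H K : Subgroup G} (hKH : K ≤ H)
    (h : ¬ p ^ 2 ∣ K.relIndex H) : ∃ x ∈ H, H ≤ zpowers x ⊔ K := by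
  by_cases hHK : H ≤ K
  · exact ⟨1, H.one_mem, hHK.trans le_sup_right⟩
  obtain ⟨x, hxH, hxK⟩ := SetLike.not_le_iff_exists.mp hHK
  refine ⟨x, hxH, by_contra fun hH ↦ h ?_⟩
  have hxL : ¬ zpowers x ⊔ K ≤ K := fun hle ↦ hxK (hle (mem_sup_left (mem_zpowers x)))
  rw [← relIndex_mul_relIndex K (zpowers x ⊔ K) H le_sup_right (sup_le (zpowers_le.mpr hxH) hKH),
    sq]
  exact mul_dvd_mul (hG.dvd_relIndex_of_not_le hxL) (hG.dvd_relIndex_of_not_le hH)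

theorem pow_dvd_relIndex_commutator (hG : IsPGroup p G) {H : Subgroup G} [H.Normal]
    (hH' : ⁅H, H⁆ ≠ ⊥) {j : ℕ} (hle : H ≤ (⊤ : Subgroup G).lowerCentralSeries j) :
    p ^ (j + 2) ∣ ⁅H, H⁆.relIndex H := by
  have := hG.isNilpotent
  have hH'D : ⁅H, H⁆ ≤ H.lowerCentralSeriesFrom (j + 1) := (commutator_mono le_rfl hle).trans
    (H.commutator_lowerCentralSeries_le_lowerCentralSeriesFrom j)
  have hchain :
      p ^ j ∣ (H.lowerCentralSeriesFrom (j + 1)).relIndex (H.lowerCentralSeriesFrom 1) := by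
    rw [← H.lowerCentralSeriesFrom_lowerCentralSeriesFrom 1 j]
    refine hG.pow_dvd_relIndex_lowerCentralSeriesFrom _ ?_
    rw [H.lowerCentralSeriesFrom_lowerCentralSeriesFrom 1 j]
    exact ne_bot_of_le_ne_bot hH' hH'D
  rw [← relIndex_mul_relIndex _ _ _ hH'D (H.lowerCentralSeriesFrom_le_self _),
    ← relIndex_mul_relIndex _ _ _ (H.lowerCentralSeriesFrom_antitone (by omega : 1 ≤ j + 1))
      (H.lowerCentralSeriesFrom_le_self 1)]
  by_cases hH₁ : p ^ 2 ∣ (H.lowerCentralSeriesFrom 1).relIndex H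
  · exact Dvd.dvd.mul_left (pow_add p j 2 ▸ mul_dvd_mul hchain hH₁) _
  have hH₁' : p ∣ (H.lowerCentralSeriesFrom 1).relIndex H := hG.dvd_relIndex_of_not_le
    (commutator_top_lt_of_ne_bot (ne_bot_of_le_ne_bot hH' (commutator_le_left H H))).not_ge
  obtain ⟨x, hx, hH⟩ :=
    hG.exists_le_zpowers_sup_of_not_sq_dvd (H.lowerCentralSeriesFrom_le_self 1) hH₁
  have hH'D' : p ∣ ⁅H, H⁆.relIndex (H.lowerCentralSeriesFrom (j + 1)) := hG.dvd_relIndex_of_not_le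
    (H.commutator_lt_lowerCentralSeriesFrom_of_le_zpowers_sup hH' hle hx hH).not_ge
  calc p ^ (j + 2) = p * (p ^ j * p) := by ring
    _ ∣ _ := mul_dvd_mul hH'D' (mul_dvd_mul hchain hH₁')

end IsPGroup

theorem hall_lemma_general
    {p : ℕ} [Fact p.Prime]
    {G : Type*} [Group G] [Finite G] (hG : IsPGroup p G)
    (H : Subgroup G) [H.Normal]
    (hnab : ∃ x ∈ H, ∃ y ∈ H, x * y ≠ y * x)
    (i : ℕ)
    (hle : H ≤ Subgroup.lowerCentralSeries (⊤ : Subgroup G) (i - 1)) :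
    p ^ (i + 1) ≤ (⁅H, H⁆).relIndex H ∧ p ^ (i + 2) ≤ Nat.card H := by
  obtain ⟨x, hx, y, hy, hxy⟩ := hnab
  have hH' : ⁅H, H⁆ ≠ ⊥ := fun h ↦ hxy <| commutatorElement_eq_one_iff_mul_comm.mp <|
    (mem_bot.mp (h ▸ commutator_mem_commutator hx hy))
  have hquot : p ^ (i + 1) ∣ ⁅H, H⁆.relIndex H :=
    (pow_dvd_pow p (by omega)).trans (hG.pow_dvd_relIndex_commutator hH' hle)
  have hH'card : p ∣ Nat.card (⁅H, H⁆ : Subgroup G) := by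
    rw [← relIndex_bot_left]
    exact hG.dvd_relIndex_of_not_le (mt le_bot_iff.mp hH')
  have hcard : p ^ (i + 2) ∣ Nat.card H := by
    rw [← relIndex_bot_left, ← relIndex_mul_relIndex _ _ _ bot_le (commutator_le_left H H),
      relIndex_bot_left, pow_succ, mul_comm]
    exact mul_dvd_mul hH'card hquot
  exact ⟨Nat.le_of_dvd (Nat.pos_of_ne_zero Subgroup.index_ne_zero_of_finite) hquot,
    Nat.le_of_dvd Nat.card_pos hcard⟩

theorem hall_lemma
    {p : ℕ} [Fact p.Prime]
    {G : Type*} [Group G] [Finite G] (hG : IsPGroup p G)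
    (H : Subgroup G) [H.Normal]
    (hnab : ∃ x ∈ H, ∃ y ∈ H, x * y ≠ y * x)
    (i : ℕ) (hi : 1 ≤ i)
    (hle : H ≤ Subgroup.lowerCentralSeries (⊤ : Subgroup G) (i - 1)) :
    p ^ (i + 1) ≤ (⁅H, H⁆).relIndex H ∧ p ^ (i + 2) ≤ Nat.card H :=
  hall_lemma_general hG H hnab i hle
end
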